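/- Fix λ > 0 and constants C1, C2 > 0. Let M = (S, A, s0, p, γ) be a finite discounted MDP without reward and π_E a stochastic policy with π_min := min_{(s,a)} π_E(a|s) > 0 and S_{M,π_E} = S. If C2 ≥ λ log(1/π_min), and r̄ ∈ ℝ^{S×A} is defined componentwise by r̄(s,a) := ∫_{𝒮R^{MCE}_M ∩ R^{MCE,S}_{M,π_E}} r(s,a) dH^{|S|}(r), the integral with respect to |S|-dimensional Hausdorff measure on ℝ^{S×A}, then there exist α > 0 and β ∈ ℝ such that α·r̄(s,a) + β = log π_E(a|s) for all (s,a) ∈ S×A. -/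

import Mathlib

open scoped ENNReal

open scoped BigOperators
open MeasureTheory

/-- A finite discounted MDP without reward. -/
structure MDP (S A : Type) [Fintype S] [Fintype A] where
  s0 : S
  p : S → A → S → ℝ
  p_nonneg : ∀ s a s', 0 ≤ p s a s'
  p_sum_one : ∀ s a, ∑ s', p s a s' = 1
  disc : ℝ
  disc_nonneg : 0 ≤ disc
  disc_lt_one : disc < 1

section Defs

variable {S A : Type} [Fintype S] [Fintype A] [DecidableEq S] [DecidableEq A]

/-- `π` is a (stochastic) policy: each `π s` is a probability distribution on actions. -/
def IsPolicy (π : S → A → ℝ) : Prop :=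
  (∀ s a, 0 ≤ π s a) ∧ ∀ s, ∑ a, π s a = 1

open Classical in
/-- The stochastic policy induced by a deterministic policy `d`. -/
noncomputable def detPolicy (d : S → A) : S → A → ℝ :=
  fun s a => if a = d s then 1 else 0

/-- The state-transition matrix of a policy. -/
noncomputable def Pmat (M : MDP S A) (π : S → A → ℝ) : Matrix S S ℝ :=
  Matrix.of fun s s' => ∑ a, π s a * M.p s a s'

/-- The value function `V^π(s; p, r)`. -/
noncomputable def Vpi (M : MDP S A) (π : S → A → ℝ) (r : S × A → ℝ) (s : S) : ℝ :=
  ∑' t : ℕ, M.disc ^ t * ((Pmat M π ^ t).mulVec (fun s' => ∑ a, π s' a * r (s', a))) s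

/-- The optimal value function `V*(s; p, r)`. -/
noncomputable def Vstar (M : MDP S A) (r : S × A → ℝ) (s : S) : ℝ :=
  ⨆ π : {π : S → A → ℝ // IsPolicy π}, Vpi M π.1 r s

noncomputable def Qpi (M : MDP S A) (π : S → A → ℝ) (r : S × A → ℝ) (s : S) (a : A) : ℝ :=
  r (s, a) + M.disc * ∑ s', M.p s a s' * Vpi M π r s'

noncomputable def Api (M : MDP S A) (π : S → A → ℝ) (r : S × A → ℝ) (s : S) (a : A) : ℝ :=
  Qpi M π r s a - Vpi M π r s

noncomputable def Qstar (M : MDP S A) (r : S × A → ℝ) (s : S) (a : A) : ℝ :=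
  r (s, a) + M.disc * ∑ s', M.p s a s' * Vstar M r s'

noncomputable def Astar (M : MDP S A) (r : S × A → ℝ) (s : S) (a : A) : ℝ :=
  Qstar M r s a - Vstar M r s

/-- The soft (entropy-regularized) value function `V^π_λ(s; p, r)`. -/
noncomputable def VpiSoft (M : MDP S A) (lam : ℝ) (π : S → A → ℝ) (r : S × A → ℝ) (s : S) : ℝ :=
  ∑' t : ℕ, M.disc ^ t *
    ((Pmat M π ^ t).mulVec
      (fun s' => ∑ a, π s' a * (r (s', a) - lam * Real.log (π s' a)))) s

noncomputable def VstarSoft (M : MDP S A) (lam : ℝ) (r : S × A → ℝ) (s : S) : ℝ :=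
  ⨆ π : {π : S → A → ℝ // IsPolicy π}, VpiSoft M lam π.1 r s

noncomputable def QstarSoft (M : MDP S A) (lam : ℝ) (r : S × A → ℝ) (s : S) (a : A) : ℝ :=
  r (s, a) + M.disc * ∑ s', M.p s a s' * VstarSoft M lam r s'

noncomputable def AstarSoft (M : MDP S A) (lam : ℝ) (r : S × A → ℝ) (s : S) (a : A) : ℝ :=
  QstarSoft M lam r s a - VstarSoft M lam r s

/-- The OPT feasible set `R^{OPT,S̄}_{M,d}` of a deterministic policy `d`. -/
def ROPT (M : MDP S A) (Sbar : Set S) (d : S → A) : Set (S × A → ℝ) :=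
  {r | ∀ s ∈ Sbar, ∀ a, Qstar M r s a ≤ Qstar M r s (d s)}

/-- The MCE feasible set `R^{MCE,S}_{M,π}` (with `S̄ = S`). -/
def RMCE (M : MDP S A) (lam : ℝ) (π : S → A → ℝ) : Set (S × A → ℝ) :=
  {r | ∀ s a, π s a =
      Real.exp (QstarSoft M lam r s a / lam) / ∑ a', Real.exp (QstarSoft M lam r s a' / lam)}

/-- The BIRL feasible set `R^{BIRL,S}_{M,π}` (with `S̄ = S`). -/
def RBIRL (M : MDP S A) (bet : ℝ) (π : S → A → ℝ) : Set (S × A → ℝ) :=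
  {r | ∀ s a, π s a =
      Real.exp (Qstar M r s a / bet) / ∑ a', Real.exp (Qstar M r s a' / bet)}

open Classical in
/-- The matrix `W_{p,π}`. -/
noncomputable def Wmat (M : MDP S A) (π : S → A → ℝ) : Matrix S S ℝ :=
  Matrix.of fun s s' => (if s' = s then (1 : ℝ) else 0) - M.disc * ∑ a, π s a * M.p s a s'

/-- `k_π := |det W_{p,π}|^{-1/|S|}`. -/
noncomputable def kpi (M : MDP S A) (π : S → A → ℝ) : ℝ :=
  |(Wmat M π).det| ^ (-(1 : ℝ) / (Fintype.card S : ℝ))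

/-- `𝒮R^{OPT}_M`. -/
def SROPT (M : MDP S A) (C1 C2 : ℝ) : Set (S × A → ℝ) :=
  {r | ∀ π : S → A → ℝ, IsPolicy π → (∀ s, Vpi M π r s = Vstar M r s) →
      ∀ s a, |Vpi M π r s| ≤ C1 * kpi M π ∧ |Api M π r s a| ≤ C2}

/-- `𝒮R^{MCE}_M`. -/
def SRMCE (M : MDP S A) (lam C1 C2 : ℝ) : Set (S × A → ℝ) :=
  {r | ∀ s a, |VstarSoft M lam r s| ≤ C1 ∧ |AstarSoft M lam r s a| ≤ C2}

/-- `𝒮R^{BIRL}_M`. -/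
def SRBIRL (M : MDP S A) (C1 C2 : ℝ) : Set (S × A → ℝ) :=
  {r | ∀ s a, |Vstar M r s| ≤ C1 ∧ |Astar M r s a| ≤ C2}

/-- Discounted state occupancy `∑_{t≥0} γ^t P_{M,π}(s_t = s)`. -/
noncomputable def occ (M : MDP S A) (π : S → A → ℝ) (s : S) : ℝ :=
  ∑' t : ℕ, M.disc ^ t * (Pmat M π ^ t) M.s0 s

/-- The support `S_{M,π}` of a policy: states reachable with positive probability. -/
def supp (M : MDP S A) (π : S → A → ℝ) : Set S := {s | 0 < occ M π s}

end Defs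

/-- The unit hypercube `[-1,1]^{S×A}`. -/
def cube (S A : Type) [Fintype S] [Fintype A] : Set (S × A → ℝ) :=
  {r | ∀ sa, |r sa| ≤ 1}

/-!
The soft Bellman equation `V* = λ log ∑ₐ exp (Q*/λ)` shows that `r ∈ R^{MCE,S}_{M,π}` iff
`Q* - V* = λ log π`, i.e. iff `r = λ log π + (v s - γ 𝔼[v s'])` with `v = V*`; conversely every
potential `v` yields such a reward with soft value `v`. Since `|λ log π| ≤ λ log (1/π_min) ≤ C2`
makes the advantage bound automatic, the domain of integration is the image of the cube
`‖v‖∞ ≤ C1` under an injective affine map. This image has positive finite `|S|`-dimensional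
Hausdorff measure and is symmetric about `λ log π`, and the point reflection preserves Hausdorff
measure, so the centroid of the domain is `λ log π`.
-/

open Finset Matrix

section LogSumExp

variable {ι : Type*} [Fintype ι]

noncomputable def logSumExp (lam : ℝ) (q : ι → ℝ) : ℝ :=
  lam * Real.log (∑ i, Real.exp (q i / lam))

noncomputable def softmax (lam : ℝ) (q : ι → ℝ) (i : ι) : ℝ :=
  Real.exp (q i / lam) / ∑ j, Real.exp (q j / lam)

variable {lam : ℝ}

lemma softmax_nonneg (q : ι → ℝ) (i : ι) : 0 ≤ softmax lam q i :=
  div_nonneg (Real.exp_pos _).le (sum_nonneg fun _ _ => (Real.exp_pos _).le)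

lemma softmax_mul_log_add_const (hlam : lam ≠ 0) {w : ι → ℝ} (hw : ∀ i, 0 < w i)
    (hw1 : ∑ i, w i = 1) (c : ℝ) :
    softmax lam (fun i => lam * Real.log (w i) + c) = w := by
  funext i
  have hexp : ∀ j, Real.exp ((lam * Real.log (w j) + c) / lam) = w j * Real.exp (c / lam) :=
    fun j => by rw [add_div, Real.exp_add, mul_div_cancel_left₀ _ hlam, Real.exp_log (hw j)]
  simp only [softmax, hexp, ← sum_mul, hw1, one_mul]
  exact mul_div_cancel_right₀ _ (Real.exp_pos _).ne'

variable [Nonempty ι]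

lemma sum_exp_div_pos (lam : ℝ) (q : ι → ℝ) : 0 < ∑ i, Real.exp (q i / lam) :=
  sum_pos (fun _ _ => Real.exp_pos _) univ_nonempty

lemma sum_softmax (q : ι → ℝ) : ∑ i, softmax lam q i = 1 := by
  simp only [softmax, ← sum_div]
  rw [div_self (sum_exp_div_pos lam q).ne']

lemma sub_mul_log_softmax (hlam : lam ≠ 0) (q : ι → ℝ) (i : ι) :
    q i - lam * Real.log (softmax lam q i) = logSumExp lam q := by
  rw [softmax, Real.log_div (Real.exp_pos _).ne' (sum_exp_div_pos lam q).ne', Real.log_exp,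
    logSumExp]
  field_simp
  ring

lemma logSumExp_add_const (hlam : lam ≠ 0) (q : ι → ℝ) (c : ℝ) :
    logSumExp lam (fun i => q i + c) = logSumExp lam q + c := by
  have hexp : ∀ i, Real.exp ((q i + c) / lam) = Real.exp (q i / lam) * Real.exp (c / lam) :=
    fun i => by rw [← Real.exp_add, add_div]
  simp only [logSumExp, hexp, ← sum_mul]
  rw [Real.log_mul (sum_exp_div_pos lam q).ne' (Real.exp_pos _).ne', Real.log_exp, mul_add,
    mul_div_cancel₀ _ hlam]

lemma logSumExp_mono (hlam : 0 < lam) {q q' : ι → ℝ} (h : ∀ i, q i ≤ q' i) :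
    logSumExp lam q ≤ logSumExp lam q' := by
  refine mul_le_mul_of_nonneg_left (Real.log_le_log (sum_exp_div_pos lam q) ?_) hlam.le
  exact sum_le_sum fun i _ => Real.exp_le_exp.2 (div_le_div_of_nonneg_right (h i) hlam.le)

lemma logSumExp_le_add (hlam : 0 < lam) {q q' : ι → ℝ} {c : ℝ} (h : ∀ i, q i ≤ q' i + c) :
    logSumExp lam q ≤ logSumExp lam q' + c :=
  (logSumExp_mono hlam h).trans_eq (logSumExp_add_const hlam.ne' q' c)

/-- Gibbs' variational principle; `sum_softmax_mul_sub_mul_log` is its equality case. -/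
lemma sum_mul_sub_mul_log_le_logSumExp (hlam : 0 < lam) {w : ι → ℝ} (hw : ∀ i, 0 ≤ w i)
    (hw1 : ∑ i, w i = 1) (q : ι → ℝ) :
    ∑ i, w i * (q i - lam * Real.log (w i)) ≤ logSumExp lam q := by
  have hterm : ∀ i, w i * (q i - lam * Real.log (w i))
      ≤ w i * logSumExp lam q + lam * (softmax lam q i - w i) := by
    intro i
    have hq := sub_mul_log_softmax hlam.ne' q i
    have hkl : w i * (Real.log (softmax lam q i) - Real.log (w i)) ≤ softmax lam q i - w i := by
      rcases (hw i).eq_or_lt with h0 | hpos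
      · rw [← h0, zero_mul, sub_zero]; exact softmax_nonneg q i
      · have hsm : 0 < softmax lam q i := div_pos (Real.exp_pos _) (sum_exp_div_pos lam q)
        rw [← Real.log_div hsm.ne' hpos.ne']
        calc w i * Real.log (softmax lam q i / w i)
            ≤ w i * (softmax lam q i / w i - 1) :=
              mul_le_mul_of_nonneg_left (Real.log_le_sub_one_of_pos (div_pos hsm hpos)) hpos.le
          _ = softmax lam q i - w i := by field_simp
    calc w i * (q i - lam * Real.log (w i))
        = w i * logSumExp lam q + lam * (w i * (Real.log (softmax lam q i) - Real.log (w i))) := by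
          rw [← hq]; ring
      _ ≤ w i * logSumExp lam q + lam * (softmax lam q i - w i) := by gcongr
  calc ∑ i, w i * (q i - lam * Real.log (w i))
      ≤ ∑ i, (w i * logSumExp lam q + lam * (softmax lam q i - w i)) :=
        sum_le_sum fun i _ => hterm i
    _ = logSumExp lam q := by
      rw [sum_add_distrib, ← sum_mul, ← mul_sum, sum_sub_distrib, sum_softmax, hw1]; ring

lemma sum_softmax_mul_sub_mul_log (hlam : lam ≠ 0) (q : ι → ℝ) :
    ∑ i, softmax lam q i * (q i - lam * Real.log (softmax lam q i)) = logSumExp lam q := by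
  simp only [sub_mul_log_softmax hlam, ← sum_mul, sum_softmax, one_mul]

lemma logSumExp_mul_log_add_const (hlam : lam ≠ 0) {w : ι → ℝ} (hw : ∀ i, 0 < w i)
    (hw1 : ∑ i, w i = 1) (c : ℝ) :
    logSumExp lam (fun i => lam * Real.log (w i) + c) = c := by
  rw [logSumExp_add_const hlam]
  simp only [logSumExp, mul_div_cancel_left₀ _ hlam, fun i => Real.exp_log (hw i), hw1,
    Real.log_one, mul_zero, zero_add]

end LogSumExp

namespace Matrix

variable {n : Type*} [Fintype n] [DecidableEq n] {Q : Matrix n n ℝ}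

lemma abs_mulVec_le_of_mem_rowStochastic (hQ : Q ∈ rowStochastic ℝ n) {c : n → ℝ} {R : ℝ}
    (hc : ∀ j, |c j| ≤ R) (i : n) : |(Q *ᵥ c) i| ≤ R :=
  calc |(Q *ᵥ c) i| ≤ ∑ j, Q i j * |c j| := by
        refine (abs_sum_le_sum_abs _ _).trans_eq (sum_congr rfl fun j _ => ?_)
        rw [abs_mul, abs_of_nonneg (hQ.1 i j)]
    _ ≤ ∑ j, Q i j * R := sum_le_sum fun j _ => mul_le_mul_of_nonneg_left (hc j) (hQ.1 i j)
    _ = R := by rw [← sum_mul, sum_row_of_mem_rowStochastic hQ, one_mul]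

lemma mulVec_le_mulVec_add_dist (hQ : Q ∈ rowStochastic ℝ n) (v w : n → ℝ) (i : n) :
    (Q *ᵥ v) i ≤ (Q *ᵥ w) i + dist v w := by
  have h := abs_mulVec_le_of_mem_rowStochastic hQ (c := v - w)
    (fun j => by simpa [Real.dist_eq] using dist_le_pi_dist v w j) i
  rw [mulVec_sub, Pi.sub_apply] at h
  linarith [le_abs_self ((Q *ᵥ v) i - (Q *ᵥ w) i)]

/-- At a minimising index the `Q`-average of `D` is at least the minimum. -/
lemma nonneg_of_mul_mulVec_le (hQ : Q ∈ rowStochastic ℝ n) {γ : ℝ} (hγ0 : 0 ≤ γ) (hγ1 : γ < 1)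
    {D : n → ℝ} (hD : ∀ i, γ * (Q *ᵥ D) i ≤ D i) (i : n) : 0 ≤ D i := by
  obtain ⟨j, -, hj⟩ := exists_min_image univ D ⟨i, mem_univ i⟩
  have hmin : D j ≤ (Q *ᵥ D) j :=
    calc D j = ∑ k, Q j k * D j := by rw [← sum_mul, sum_row_of_mem_rowStochastic hQ, one_mul]
      _ ≤ ∑ k, Q j k * D k :=
        sum_le_sum fun k _ => mul_le_mul_of_nonneg_left (hj k (mem_univ k)) (hQ.1 j k)
  have hj0 : 0 ≤ D j := by nlinarith [mul_le_mul_of_nonneg_left hmin hγ0, hD j]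
  exact hj0.trans (hj i (mem_univ i))

lemma le_of_le_bellman_of_bellman_le (hQ : Q ∈ rowStochastic ℝ n) {γ : ℝ} (hγ0 : 0 ≤ γ)
    (hγ1 : γ < 1) {c f g : n → ℝ} (hf : ∀ i, f i ≤ c i + γ * (Q *ᵥ f) i)
    (hg : ∀ i, c i + γ * (Q *ᵥ g) i ≤ g i) (i : n) : f i ≤ g i := by
  have h := nonneg_of_mul_mulVec_le hQ hγ0 hγ1 (D := g - f) (fun j => by
    rw [mulVec_sub, Pi.sub_apply, Pi.sub_apply, mul_sub]; linarith [hf j, hg j]) i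
  simpa using h

lemma summable_geometric_mulVec (hQ : Q ∈ rowStochastic ℝ n) {γ : ℝ} (hγ0 : 0 ≤ γ)
    (hγ1 : γ < 1) (c : n → ℝ) (i : n) : Summable fun t : ℕ => γ ^ t * (Q ^ t *ᵥ c) i := by
  refine Summable.of_norm_bounded
    ((summable_geometric_of_lt_one hγ0 hγ1).mul_right (∑ j, |c j|)) fun t => ?_
  rw [Real.norm_eq_abs, abs_mul, abs_of_nonneg (pow_nonneg hγ0 t)]
  exact mul_le_mul_of_nonneg_left (abs_mulVec_le_of_mem_rowStochastic (pow_mem hQ t)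
    (fun j => single_le_sum (fun k _ => abs_nonneg (c k)) (mem_univ j)) i) (pow_nonneg hγ0 t)

lemma tsum_geometric_mulVec_eq (hQ : Q ∈ rowStochastic ℝ n) {γ : ℝ} (hγ0 : 0 ≤ γ)
    (hγ1 : γ < 1) (c : n → ℝ) (i : n) :
    ∑' t : ℕ, γ ^ t * (Q ^ t *ᵥ c) i
      = c i + γ * (Q *ᵥ fun j => ∑' t : ℕ, γ ^ t * (Q ^ t *ᵥ c) j) i := by
  have hs := summable_geometric_mulVec hQ hγ0 hγ1 c
  rw [(hs i).tsum_eq_zero_add]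
  simp only [pow_zero, one_mulVec, one_mul]
  congr 1
  calc ∑' t : ℕ, γ ^ (t + 1) * (Q ^ (t + 1) *ᵥ c) i
      = ∑' t : ℕ, ∑ j, γ * (Q i j * (γ ^ t * (Q ^ t *ᵥ c) j)) := by
        refine tsum_congr fun t => ?_
        rw [pow_succ' Q, ← mulVec_mulVec, mulVec, dotProduct, mul_sum]
        exact sum_congr rfl fun j _ => by ring
    _ = ∑ j, ∑' t : ℕ, γ * (Q i j * (γ ^ t * (Q ^ t *ᵥ c) j)) :=
        Summable.tsum_finsetSum fun j _ => ((hs j).mul_left _).mul_left _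
    _ = γ * (Q *ᵥ fun j => ∑' t : ℕ, γ ^ t * (Q ^ t *ᵥ c) j) i := by
        rw [mulVec, dotProduct, mul_sum]
        exact sum_congr rfl fun j _ => by rw [tsum_mul_left, tsum_mul_left]

end Matrix

lemma IsPolicy.nonempty {S A : Type} [Fintype A] {π : S → A → ℝ} (hπ : IsPolicy π) (s : S) :
    Nonempty A := by
  rcases isEmpty_or_nonempty A with hA | hA
  · simpa using hπ.2 s
  · exact hA

lemma IsPolicy.le_one {S A : Type} [Fintype A] {π : S → A → ℝ} (hπ : IsPolicy π) (s : S)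
    (a : A) : π s a ≤ 1 :=
  (single_le_sum (fun a' _ => hπ.1 s a') (mem_univ a)).trans_eq (hπ.2 s)

section

variable {S A : Type} [Fintype S] [Fintype A]

noncomputable def softReward (lam : ℝ) (π : S → A → ℝ) (r : S × A → ℝ) (s : S) : ℝ :=
  ∑ a, π s a * (r (s, a) - lam * Real.log (π s a))

namespace MDP

variable (M : MDP S A)

def transition (a : A) : Matrix S S ℝ := Matrix.of fun s s' => M.p s a s'

lemma transition_mulVec (a : A) (v : S → ℝ) (s : S) :
    (M.transition a *ᵥ v) s = ∑ s', M.p s a s' * v s' := rfl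

noncomputable def actionValue (r : S × A → ℝ) (v : S → ℝ) (s : S) (a : A) : ℝ :=
  r (s, a) + M.disc * ∑ s', M.p s a s' * v s'

noncomputable def softBellman (lam : ℝ) (r : S × A → ℝ) (v : S → ℝ) (s : S) : ℝ :=
  logSumExp lam (M.actionValue r v s)

noncomputable def softmaxPolicy (lam : ℝ) (r : S × A → ℝ) (v : S → ℝ) (s : S) : A → ℝ :=
  softmax lam (M.actionValue r v s)

def shaping : (S → ℝ) →ₗ[ℝ] (S × A → ℝ) where
  toFun v sa := v sa.1 - M.disc * ∑ s', M.p sa.1 sa.2 s' * v s'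
  map_add' v w := by
    funext sa
    simp only [Pi.add_apply, mul_add, sum_add_distrib]
    ring
  map_smul' c v := by
    funext sa
    simp only [Pi.smul_apply, smul_eq_mul, RingHom.id_apply, mul_left_comm _ c, ← mul_sum]
    ring

lemma shaping_apply (v : S → ℝ) (s : S) (a : A) :
    M.shaping v (s, a) = v s - M.disc * ∑ s', M.p s a s' * v s' := rfl

lemma actionValue_add_shaping (b : S × A → ℝ) (v : S → ℝ) (s : S) (a : A) :
    M.actionValue (b + M.shaping v) v s a = b (s, a) + v s := by
  rw [actionValue, Pi.add_apply, shaping_apply]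
  ring

lemma sum_mul_actionValue_sub (lam : ℝ) (π : S → A → ℝ) (r : S × A → ℝ) (v : S → ℝ) (s : S) :
    ∑ a, π s a * (M.actionValue r v s a - lam * Real.log (π s a))
      = softReward lam π r s + M.disc * (Pmat M π *ᵥ v) s := by
  have h : ∀ a, π s a * (M.actionValue r v s a - lam * Real.log (π s a))
      = π s a * (r (s, a) - lam * Real.log (π s a))
        + M.disc * (π s a * ∑ s', M.p s a s' * v s') := fun a => by rw [actionValue]; ring
  rw [sum_congr rfl fun a _ => h a, sum_add_distrib, softReward]
  congr 1
  simp only [Pmat, mulVec, dotProduct, of_apply, mul_sum, sum_mul]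
  rw [sum_comm]
  simp only [mul_assoc]

lemma isPolicy_softmaxPolicy [Nonempty A] (lam : ℝ) (r : S × A → ℝ) (v : S → ℝ) :
    IsPolicy (M.softmaxPolicy lam r v) :=
  ⟨fun _ => softmax_nonneg _, fun _ => sum_softmax _⟩

variable [DecidableEq S]

lemma transition_mem_rowStochastic (a : A) : M.transition a ∈ rowStochastic ℝ S :=
  mem_rowStochastic_iff_sum.2 ⟨fun s s' => M.p_nonneg s a s', fun s => M.p_sum_one s a⟩

lemma Pmat_mem_rowStochastic {π : S → A → ℝ} (hπ : IsPolicy π) :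
    Pmat M π ∈ rowStochastic ℝ S := by
  refine mem_rowStochastic_iff_sum.2
    ⟨fun s s' => sum_nonneg fun a _ => mul_nonneg (hπ.1 s a) (M.p_nonneg s a s'), fun s => ?_⟩
  simp only [Pmat, of_apply]
  rw [sum_comm]
  simp only [← mul_sum, M.p_sum_one, mul_one, hπ.2 s]

lemma softBellman_contracting [Nonempty A] {lam : ℝ} (hlam : 0 < lam) (r : S × A → ℝ) :
    ContractingWith M.disc.toNNReal (M.softBellman lam r) := by
  refine ⟨by simpa using M.disc_lt_one, LipschitzWith.of_dist_le_mul fun v w => ?_⟩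
  rw [Real.coe_toNNReal _ M.disc_nonneg]
  have key : ∀ v w s, M.softBellman lam r v s ≤ M.softBellman lam r w s + M.disc * dist v w :=
    fun v w s => logSumExp_le_add hlam fun a => by
      have h := mulVec_le_mulVec_add_dist (M.transition_mem_rowStochastic a) v w s
      rw [transition_mulVec, transition_mulVec] at h
      simp only [actionValue]
      nlinarith [M.disc_nonneg]
  refine (dist_pi_le_iff (mul_nonneg M.disc_nonneg dist_nonneg)).2 fun s => ?_
  rw [Real.dist_eq, abs_sub_le_iff]
  have hwv := key w v s
  rw [dist_comm] at hwv
  exact ⟨by linarith [key v w s], by linarith⟩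

lemma shaping_injective [Nonempty A] : Function.Injective M.shaping := by
  refine (injective_iff_map_eq_zero M.shaping).2 fun v hv => ?_
  obtain ⟨a⟩ := ‹Nonempty A›
  have hQ := M.transition_mem_rowStochastic a
  have hfix : ∀ s, v s = 0 + M.disc * (M.transition a *ᵥ v) s := fun s => by
    have h := congrFun hv (s, a)
    rw [shaping_apply] at h
    rw [transition_mulVec]
    simpa [sub_eq_zero] using h
  funext s
  refine le_antisymm ?_ ?_
  · exact le_of_le_bellman_of_bellman_le hQ M.disc_nonneg M.disc_lt_one (c := 0) (g := 0)
      (fun s => (hfix s).le) (fun s => by simp) s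
  · exact le_of_le_bellman_of_bellman_le hQ M.disc_nonneg M.disc_lt_one (c := 0) (f := 0)
      (fun s => by simp) (fun s => (hfix s).ge) s

variable {M}

lemma VpiSoft_eq_softReward_add {π : S → A → ℝ} (hπ : IsPolicy π) (lam : ℝ) (r : S × A → ℝ)
    (s : S) :
    VpiSoft M lam π r s = softReward lam π r s + M.disc * (Pmat M π *ᵥ VpiSoft M lam π r) s :=
  tsum_geometric_mulVec_eq (M.Pmat_mem_rowStochastic hπ) M.disc_nonneg M.disc_lt_one _ s

lemma VpiSoft_le_of_isFixedPt {lam : ℝ} (hlam : 0 < lam) {π : S → A → ℝ} (hπ : IsPolicy π)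
    {r : S × A → ℝ} {v : S → ℝ} (hv : Function.IsFixedPt (M.softBellman lam r) v) (s : S) :
    VpiSoft M lam π r s ≤ v s := by
  have : Nonempty A := hπ.nonempty s
  refine le_of_le_bellman_of_bellman_le (M.Pmat_mem_rowStochastic hπ) M.disc_nonneg
    M.disc_lt_one (fun s => (VpiSoft_eq_softReward_add hπ lam r s).le) (fun s => ?_) s
  rw [← sum_mul_actionValue_sub]
  exact (sum_mul_sub_mul_log_le_logSumExp hlam (hπ.1 s) (hπ.2 s) _).trans_eq (congrFun hv s)

variable [Nonempty A]

lemma VpiSoft_softmaxPolicy {lam : ℝ} (hlam : 0 < lam) {r : S × A → ℝ} {v : S → ℝ}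
    (hv : Function.IsFixedPt (M.softBellman lam r) v) (s : S) :
    VpiSoft M lam (M.softmaxPolicy lam r v) r s = v s := by
  have hπ := M.isPolicy_softmaxPolicy lam r v
  refine le_antisymm (VpiSoft_le_of_isFixedPt hlam hπ hv s) ?_
  refine le_of_le_bellman_of_bellman_le (M.Pmat_mem_rowStochastic hπ) M.disc_nonneg
    M.disc_lt_one (fun s => ?_) (fun s => (VpiSoft_eq_softReward_add hπ lam r s).ge) s
  rw [← sum_mul_actionValue_sub]
  exact ((congrFun hv s).symm.trans (sum_softmax_mul_sub_mul_log hlam.ne' _).symm).le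

/-- `v` dominates every policy's soft value and is attained by its softmax policy. -/
lemma VstarSoft_eq_of_isFixedPt {lam : ℝ} (hlam : 0 < lam) {r : S × A → ℝ} {v : S → ℝ}
    (hv : Function.IsFixedPt (M.softBellman lam r) v) : VstarSoft M lam r = v := by
  funext s
  have hπv := M.isPolicy_softmaxPolicy lam r v
  have : Nonempty {π : S → A → ℝ // IsPolicy π} := ⟨⟨_, hπv⟩⟩
  have hle : ∀ π : {π : S → A → ℝ // IsPolicy π}, VpiSoft M lam π.1 r s ≤ v s :=
    fun π => VpiSoft_le_of_isFixedPt hlam π.2 hv s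
  refine le_antisymm (ciSup_le hle) ?_
  exact le_ciSup_of_le ⟨v s, Set.forall_mem_range.2 hle⟩ ⟨_, hπv⟩
    (VpiSoft_softmaxPolicy hlam hv s).ge

lemma isFixedPt_VstarSoft {lam : ℝ} (hlam : 0 < lam) (r : S × A → ℝ) :
    Function.IsFixedPt (M.softBellman lam r) (VstarSoft M lam r) := by
  have hc := M.softBellman_contracting hlam r
  rw [VstarSoft_eq_of_isFixedPt hlam hc.fixedPoint_isFixedPt]
  exact hc.fixedPoint_isFixedPt

lemma VstarSoft_mul_log_add_shaping {lam : ℝ} (hlam : 0 < lam) {π : S → A → ℝ}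
    (hπ : ∀ s a, 0 < π s a) (hπ1 : ∀ s, ∑ a, π s a = 1) (v : S → ℝ) :
    VstarSoft M lam ((fun sa => lam * Real.log (π sa.1 sa.2)) + M.shaping v) = v := by
  refine VstarSoft_eq_of_isFixedPt hlam (funext fun s => ?_)
  rw [softBellman, funext (M.actionValue_add_shaping _ v s)]
  exact logSumExp_mul_log_add_const hlam.ne' (hπ s) (hπ1 s) (v s)

theorem SRMCE_inter_RMCE_eq_image {lam C1 C2 : ℝ} (hlam : 0 < lam) (hC1 : 0 ≤ C1)
    {π : S → A → ℝ} (hπ : ∀ s a, 0 < π s a) (hπ1 : ∀ s, ∑ a, π s a = 1)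
    (hC2 : ∀ s a, |lam * Real.log (π s a)| ≤ C2) :
    SRMCE M lam C1 C2 ∩ RMCE M lam π
      = (fun v => (fun sa => lam * Real.log (π sa.1 sa.2)) + M.shaping v) ''
          Metric.closedBall 0 C1 := by
  have hball : ∀ v : S → ℝ, v ∈ Metric.closedBall 0 C1 ↔ ∀ s, |v s| ≤ C1 := fun v => by
    simp only [mem_closedBall_zero_iff, pi_norm_le_iff_of_nonneg hC1, Real.norm_eq_abs]
  ext r
  constructor
  · rintro ⟨hS, hR⟩
    obtain ⟨a₀⟩ := ‹Nonempty A›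
    refine ⟨VstarSoft M lam r, (hball _).2 fun s => (hS s a₀).1, funext fun ⟨s, a⟩ => ?_⟩
    have hlog : lam * Real.log (π s a) = QstarSoft M lam r s a - VstarSoft M lam r s := by
      have h := sub_mul_log_softmax hlam.ne' (QstarSoft M lam r s) a
      rw [show softmax lam (QstarSoft M lam r s) a = π s a from (hR s a).symm] at h
      have hV : VstarSoft M lam r s = logSumExp lam (QstarSoft M lam r s) :=
        (congrFun (M.isFixedPt_VstarSoft hlam r) s).symm
      linarith
    simp only [Pi.add_apply, shaping_apply, hlog, QstarSoft]
    ring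
  · rintro ⟨v, hv, rfl⟩
    have hV := VstarSoft_mul_log_add_shaping (M := M) hlam hπ hπ1 v
    have hQ : ∀ s a, QstarSoft M lam ((fun sa => lam * Real.log (π sa.1 sa.2)) + M.shaping v) s a
        = lam * Real.log (π s a) + v s := fun s a => by
      rw [show QstarSoft M lam _ s a = M.actionValue _ _ s a from rfl, hV, actionValue_add_shaping]
    refine ⟨fun s a => ⟨?_, ?_⟩, fun s a => ?_⟩
    · rw [hV]; exact (hball v).1 hv s
    · rw [AstarSoft, hQ, hV, add_sub_cancel_right]; exact hC2 s a
    · simp only [hQ]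
      exact (congrFun (softmax_mul_log_add_const hlam.ne' (hπ s) (hπ1 s) (v s)) a).symm

end MDP

end

lemma IsCompact.integrableOn_of_measure_ne_top {X F : Type*} [TopologicalSpace X] [T2Space X]
    [MeasurableSpace X] [OpensMeasurableSpace X] [NormedAddCommGroup F]
    [SecondCountableTopology F] {μ : Measure X} {K : Set X} (hK : IsCompact K) (hμK : μ K ≠ ∞)
    {f : X → F} (hf : Continuous f) : IntegrableOn f K μ := by
  obtain ⟨C, hC⟩ := hK.exists_bound_of_continuousOn hf.continuousOn
  exact Measure.integrableOn_of_bounded hμK hf.aestronglyMeasurable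
    ((ae_restrict_iff' hK.measurableSet).2 (Filter.Eventually.of_forall hC))

section Hausdorff

variable {X Y : Type*} [EMetricSpace X] [EMetricSpace Y] [MeasurableSpace X] [BorelSpace X]
  [MeasurableSpace Y] [BorelSpace Y] {K : NNReal} {f : X → Y} {d : ℝ} {s : Set X}

lemma AntilipschitzWith.hausdorffMeasure_image_pos (hf : AntilipschitzWith K f) (hd : 0 ≤ d)
    (hs : 0 < μH[d] s) : 0 < μH[d] (f '' s) := by
  refine pos_iff_ne_zero.2 fun h => hs.ne' ?_
  simpa [h] using hf.le_hausdorffMeasure_image hd s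

lemma LipschitzWith.hausdorffMeasure_image_lt_top (hf : LipschitzWith K f) (hd : 0 ≤ d)
    (hs : μH[d] s < ∞) : μH[d] (f '' s) < ∞ :=
  (hf.hausdorffMeasure_image_le hd s).trans_lt
    (ENNReal.mul_lt_top (ENNReal.rpow_lt_top_of_nonneg hd ENNReal.coe_ne_top) hs)

end Hausdorff

section Centroid

variable {E : Type*} [NormedAddCommGroup E] [NormedSpace ℝ E] [MeasurableSpace E] [BorelSpace E]

lemma setIntegral_eq_measureReal_mul_of_pointReflection {μ : Measure E} {b : E} {K : Set E}
    (hμ : MeasurePreserving (AffineIsometryEquiv.pointReflection ℝ b) μ μ)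
    (hK : AffineIsometryEquiv.pointReflection ℝ b ⁻¹' K = K) (hKfin : μ K ≠ ∞)
    (f : E →L[ℝ] ℝ) (hf : IntegrableOn f K μ) :
    ∫ x in K, f x ∂μ = μ.real K * f b := by
  have hσ : ∀ x, f (AffineIsometryEquiv.pointReflection ℝ b x) = 2 * f b - f x := fun x => by
    rw [AffineIsometryEquiv.pointReflection_apply, vsub_eq_sub, vadd_eq_add, map_add, map_sub]
    ring
  have h := hμ.setIntegral_preimage_emb
    (AffineIsometryEquiv.pointReflection ℝ b).toHomeomorph.measurableEmbedding f K
  simp only [hK, hσ] at h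
  have hconst : Integrable (fun _ => 2 * f b) (μ.restrict K) := integrableOn_const hKfin
  rw [integral_sub hconst hf, setIntegral_const, smul_eq_mul] at h
  linarith

/-- The image is symmetric about `b`, and bi-Lipschitz images of a ball have positive finite
Hausdorff measure. -/
theorem exists_pos_setIntegral_affine_image_closedBall {ι : Type*} [Fintype ι]
    (L : (ι → ℝ) →ₗ[ℝ] E) (hL : Function.Injective L) (b : E) {R : ℝ} (hR : 0 < R) :
    ∃ m > 0, ∀ f : E →L[ℝ] ℝ,
      ∫ x in (fun v => b + L v) '' Metric.closedBall 0 R, f x ∂μH[Fintype.card ι] = m * f b := by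
  set K := (fun v => b + L v) '' Metric.closedBall 0 R
  have hd : (0 : ℝ) ≤ Fintype.card ι := Nat.cast_nonneg _
  obtain ⟨Ka, -, hKa⟩ := L.exists_antilipschitzWith (LinearMap.ker_eq_bot.2 hL)
  have hlip : LipschitzWith ‖L.toContinuousLinearMap‖₊ fun v => b + L v :=
    LipschitzWith.of_dist_le_mul fun v w => by
      simpa [dist_add_left] using L.toContinuousLinearMap.lipschitz.dist_le_mul v w
  have hanti : AntilipschitzWith Ka fun v => b + L v :=
    AntilipschitzWith.of_le_mul_dist fun v w => by simpa [dist_add_left] using hKa.le_mul_dist v w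
  have hpos : 0 < μH[Fintype.card ι] K := hanti.hausdorffMeasure_image_pos hd (by
    rw [hausdorffMeasure_pi_real]; exact Metric.measure_closedBall_pos _ _ hR)
  have hfin : μH[Fintype.card ι] K < ∞ := hlip.hausdorffMeasure_image_lt_top hd (by
    rw [hausdorffMeasure_pi_real]; exact measure_closedBall_lt_top)
  have hmaps : ∀ x ∈ K, AffineIsometryEquiv.pointReflection ℝ b x ∈ K := by
    rintro _ ⟨v, hv, rfl⟩
    refine ⟨-v, by simpa using hv, ?_⟩
    simp only [AffineIsometryEquiv.pointReflection_apply, vsub_eq_sub, vadd_eq_add, map_neg]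
    abel
  have hsymm : AffineIsometryEquiv.pointReflection ℝ b ⁻¹' K = K :=
    Set.Subset.antisymm (fun x hx =>
      AffineIsometryEquiv.pointReflection_involutive (𝕜 := ℝ) b x ▸ hmaps _ hx) hmaps
  refine ⟨μH[Fintype.card ι].real K, ENNReal.toReal_pos hpos.ne' hfin.ne, fun f => ?_⟩
  have hpres := (AffineIsometryEquiv.pointReflection ℝ b).toIsometryEquiv
    |>.measurePreserving_hausdorffMeasure (Fintype.card ι)
  exact setIntegral_eq_measureReal_mul_of_pointReflection hpres hsymm hfin.ne f
    (((isCompact_closedBall 0 R).image hlip.continuous).integrableOn_of_measure_ne_top hfin.ne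
      f.continuous)

end Centroid

lemma abs_mul_log_le {lam p pmin C : ℝ} (hlam : 0 < lam) (hpmin : 0 < pmin) (hp : pmin ≤ p)
    (hp1 : p ≤ 1) (hC : lam * Real.log (1 / pmin) ≤ C) : |lam * Real.log p| ≤ C := by
  have hlog : |Real.log p| ≤ Real.log (1 / pmin) := by
    rw [abs_of_nonpos (Real.log_nonpos (hpmin.trans_le hp).le hp1), one_div, Real.log_inv,
      neg_le_neg_iff]
    exact Real.log_le_log hpmin hp
  rw [abs_mul, abs_of_pos hlam]
  exact (mul_le_mul_of_nonneg_left hlog hlam.le).trans hC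

lemma WithLp.preimage_ofLp_image_const_add {V W : Type*} [AddCommGroup V] [Module ℝ V]
    [AddCommGroup W] [Module ℝ W] (p : ℝ≥0∞) (L : V →ₗ[ℝ] W) (b : W) (K : Set V) :
    WithLp.ofLp (p := p) ⁻¹' ((fun v => b + L v) '' K)
      = (fun v => WithLp.toLp p b + ((WithLp.linearEquiv p ℝ W).symm.toLinearMap ∘ₗ L) v) '' K := by
  ext x
  constructor
  · rintro ⟨v, hv, hx⟩
    exact ⟨v, hv, by rw [← WithLp.toLp_ofLp (p := p) x, ← hx]; rfl⟩
  · rintro ⟨v, hv, rfl⟩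
    exact ⟨v, hv, rfl⟩

theorem statement8_general {S A : Type} [Fintype S] [Fintype A] [DecidableEq S]
    (lam C1 C2 : ℝ) (hlam : 0 < lam) (hC1 : 0 < C1)
    (M : MDP S A) (πE : S → A → ℝ) (hπE : IsPolicy πE)
    (πmin : ℝ) (hπmin : 0 < πmin) (hlb : ∀ s a, πmin ≤ πE s a)
    (hC2' : lam * Real.log (1 / πmin) ≤ C2) :
    ∃ α β : ℝ, 0 < α ∧ ∀ s a,
      α * (∫ x in (show Set (EuclideanSpace ℝ (S × A)) from WithLp.ofLp ⁻¹' (SRMCE M lam C1 C2 ∩ RMCE M lam πE)),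
            x (s, a) ∂(μH[(Fintype.card S : ℝ)])) + β = Real.log (πE s a) := by
  have : Nonempty A := hπE.nonempty M.s0
  have hpos : ∀ s a, 0 < πE s a := fun s a => hπmin.trans_le (hlb s a)
  have hC2 : ∀ s a, |lam * Real.log (πE s a)| ≤ C2 := fun s a =>
    abs_mul_log_le hlam hπmin (hlb s a) (hπE.le_one s a) hC2'
  obtain ⟨m, hm, hcentroid⟩ := exists_pos_setIntegral_affine_image_closedBall
    ((WithLp.linearEquiv 2 ℝ (S × A → ℝ)).symm.toLinearMap ∘ₗ M.shaping)
    ((WithLp.linearEquiv 2 ℝ (S × A → ℝ)).symm.injective.comp M.shaping_injective)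
    (WithLp.toLp 2 fun sa => lam * Real.log (πE sa.1 sa.2)) hC1
  refine ⟨(lam * m)⁻¹, 0, by positivity, fun s a => ?_⟩
  have h : ∫ x in (fun v => WithLp.toLp 2 (fun sa => lam * Real.log (πE sa.1 sa.2))
        + ((WithLp.linearEquiv 2 ℝ (S × A → ℝ)).symm.toLinearMap ∘ₗ M.shaping) v) ''
          Metric.closedBall 0 C1, x (s, a) ∂μH[(Fintype.card S : ℝ)]
      = m * (lam * Real.log (πE s a)) :=
    hcentroid (EuclideanSpace.proj (s, a))
  dsimp only
  rw [M.SRMCE_inter_RMCE_eq_image hlam hC1.le hpos hπE.2 hC2,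
    WithLp.preimage_ofLp_image_const_add, h, add_zero]
  field_simp

/-- the centroid of `𝒮R^{MCE}_M ∩ R^{MCE,S}_{M,π_E}`, after rescaling,
is `log π_E(a|s)`. -/
theorem statement8 {S A : Type} [Fintype S] [Fintype A] [DecidableEq S] [DecidableEq A]
    (lam C1 C2 : ℝ) (hlam : 0 < lam) (hC1 : 0 < C1) (hC2 : 0 < C2)
    (M : MDP S A) (πE : S → A → ℝ) (hπE : IsPolicy πE)
    (πmin : ℝ) (hπmin : 0 < πmin) (hlb : ∀ s a, πmin ≤ πE s a)
    (hsupp : supp M πE = Set.univ)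
    (hC2' : lam * Real.log (1 / πmin) ≤ C2) :
    ∃ α β : ℝ, 0 < α ∧ ∀ s a,
      α * (∫ x in (show Set (EuclideanSpace ℝ (S × A)) from WithLp.ofLp ⁻¹' (SRMCE M lam C1 C2 ∩ RMCE M lam πE)),
            x (s, a) ∂(μH[(Fintype.card S : ℝ)])) + β = Real.log (πE s a) :=
  statement8_general lam C1 C2 hlam hC1 M πE hπE πmin hπmin hlb hC2'
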